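/- BGA reduces loss at least as much as UGA: with a□ = α□(p,π) (BGA minimizer over Q□_π, satisfying the KKT conditions) and a★ = α★(p,π) (UGA minimizer over Q_π, satisfying Lagrange conditions), for any y ∈ Q□_π: Σ_i [d_φ(p_{i·}, y_{i·}) − d_φ(a□_{i·}, y_{i·})] ≥ Σ_i d_φ(p_{i·}, a□_{i·}) ≥ Σ_i d_φ(p_{i·}, a★_{i·}) = Σ_i [d_φ(p_{i·}, y_{i·}) − d_φ(a★_{i·}, y_{i·})]. -/

import Mathlib

/-- Bregman divergence of `φ` with gradient map `g`. -/
noncomputable def bregman {k : ℕ} (φ : (Fin k → ℝ) → ℝ) (g : (Fin k → ℝ) → Fin k → ℝ)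
    (p q : Fin k → ℝ) : ℝ :=
  φ q - φ p - ∑ j, (q j - p j) * g p j

/-- The set `Q_π` of adjusted prediction matrices: rows sum to 1, column means equal `π`. -/
def Qpi (n k : ℕ) (π : Fin k → ℝ) : Set (Fin n → Fin k → ℝ) :=
  {a | (∀ i, ∑ j, a i j = 1) ∧ (∀ j, (1 / (n : ℝ)) * ∑ i, a i j = π j)}

/-- The bounded version `Q□_π`, additionally requiring nonnegative entries. -/
def QpiB (n k : ℕ) (π : Fin k → ℝ) : Set (Fin n → Fin k → ℝ) :=
  {a ∈ Qpi n k π | ∀ i j, 0 ≤ a i j}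

/-!
For any `a` the three-point identity gives
`Σ_i [d(p_i, y_i) - d(a_i, y_i)] = Σ_i d(p_i, a_i) + Σ_i ⟨y_i - a_i, g(a_i) - g(p_i)⟩`.
The Lagrange conditions make the correction term vanish for `a = a★` and every `y ∈ Q_π`, the
KKT conditions make it nonnegative for `a = a□` and every `y ∈ Q□_π`. Taking `y = a□` in the
former gives the Pythagorean relation `Σ d(p, a□) = Σ d(p, a★) + Σ d(a★, a□)`, and Bregman
divergences of a convex function are nonnegative by the tangent-line inequality.
-/

open Set Finset

theorem ConvexOn.le_sub_of_hasFDerivAt {E : Type*} [NormedAddCommGroup E] [NormedSpace ℝ E]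
    {s : Set E} {f : E → ℝ} {f' : E →L[ℝ] ℝ} {x y : E} (hf : ConvexOn ℝ s f)
    (hx : x ∈ s) (hy : y ∈ s) (hfx : HasFDerivAt f f' x) :
    f' (y - x) ≤ f y - f x := by
  set ℓ : ℝ →ᵃ[ℝ] E := AffineMap.lineMap x y
  have hderiv : HasDerivAt (f ∘ ℓ) (f' (y - x)) 0 :=
    (by simpa [ℓ] using hfx : HasFDerivAt f f' (ℓ 0)).comp_hasDerivAt 0
      AffineMap.hasDerivAt_lineMap
  simpa [slope_def_field, ℓ] using (hf.comp_affineMap ℓ).le_slope_of_hasDerivAt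
    (by simpa [ℓ] using hx) (by simpa [ℓ] using hy) zero_lt_one hderiv

theorem bregman_nonneg {k : ℕ} {φ : (Fin k → ℝ) → ℝ} {g : (Fin k → ℝ) → Fin k → ℝ}
    (hφ : ConvexOn ℝ univ φ)
    (hg : ∀ x, HasGradientAt (fun y : EuclideanSpace ℝ (Fin k) => φ ((WithLp.equiv 2 (Fin k → ℝ)) y))
      ((WithLp.equiv 2 (Fin k → ℝ)).symm (g x)) ((WithLp.equiv 2 (Fin k → ℝ)).symm x))
    (p q : Fin k → ℝ) : 0 ≤ bregman φ g p q := by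
  have := (hφ.comp_linearMap (WithLp.linearEquiv 2 ℝ (Fin k → ℝ)).toLinearMap).le_sub_of_hasFDerivAt
    (mem_univ _) (mem_univ _) (hg p).hasFDerivAt (y := (WithLp.equiv 2 (Fin k → ℝ)).symm q)
  rw [bregman, sub_sub, sub_nonneg, ← le_sub_iff_add_le']
  simpa [PiLp.inner_apply, mul_comm] using this

theorem bregman_sub_bregman {k : ℕ} (φ : (Fin k → ℝ) → ℝ) (g : (Fin k → ℝ) → Fin k → ℝ)
    (p a y : Fin k → ℝ) :
    bregman φ g p y - bregman φ g a y
      = bregman φ g p a + ∑ j, (y j - a j) * (g a j - g p j) := by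
  simp only [bregman]
  have h : ∀ j, (y j - a j) * (g a j - g p j)
      = (y j - a j) * g a j - (y j - p j) * g p j + (a j - p j) * g p j := fun j => by ring
  simp only [h, sum_add_distrib, sum_sub_distrib]
  ring

theorem sum_sum_mul_add_eq_zero {ι κ : Type*} [Fintype ι] [Fintype κ] {w : ι → κ → ℝ}
    (hrow : ∀ i, ∑ j, w i j = 0) (hcol : ∀ j, ∑ i, w i j = 0) (c : ι → ℝ) (d : κ → ℝ) :
    ∑ i, ∑ j, w i j * (c i + d j) = 0 := by
  simp only [mul_add, sum_add_distrib]
  rw [sum_comm (f := fun i j => w i j * d j)]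
  simp [← sum_mul, hrow, hcol]

namespace Qpi

variable {n k : ℕ} {π : Fin k → ℝ} {u v : Fin n → Fin k → ℝ}

theorem sum_sub_row_eq_zero (hu : u ∈ Qpi n k π) (hv : v ∈ Qpi n k π) (i : Fin n) :
    ∑ j, (u i j - v i j) = 0 := by
  rw [sum_sub_distrib, hu.1, hv.1, sub_self]

theorem sum_sub_col_eq_zero (hu : u ∈ Qpi n k π) (hv : v ∈ Qpi n k π) (j : Fin k) :
    ∑ i, (u i j - v i j) = 0 := by
  -- for `n = 0` the column condition is void (`1 / 0 = 0`), but then the sums are empty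
  rcases n.eq_zero_or_pos with rfl | hn
  · simp
  · have h := (hu.2 j).trans (hv.2 j).symm
    rw [sum_sub_distrib, mul_right_injective₀ (by positivity) h, sub_self]

theorem sum_sub_mul_eq_zero (hu : u ∈ Qpi n k π) (hv : v ∈ Qpi n k π)
    {G : Fin n → Fin k → ℝ} {θ : Fin n → ℝ} {lam : Fin k → ℝ}
    (hG : ∀ i j, G i j = -θ i - lam j) :
    ∑ i, ∑ j, (u i j - v i j) * G i j = 0 := by
  simp only [hG, sub_eq_add_neg (-θ _)]
  exact sum_sum_mul_add_eq_zero (sum_sub_row_eq_zero hu hv) (sum_sub_col_eq_zero hu hv) _ _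

end Qpi

theorem QpiB.sum_sub_mul_nonneg {n k : ℕ} {π : Fin k → ℝ} {y a : Fin n → Fin k → ℝ}
    (hy : y ∈ QpiB n k π) (ha : a ∈ Qpi n k π)
    {G ψ : Fin n → Fin k → ℝ} {θ : Fin n → ℝ} {lam : Fin k → ℝ}
    (hψ0 : ∀ i j, 0 ≤ ψ i j) (hcs : ∀ i j, ψ i j * a i j = 0)
    (hG : ∀ i j, G i j = ψ i j - θ i - lam j) :
    0 ≤ ∑ i, ∑ j, (y i j - a i j) * G i j := by
  -- complementary slackness leaves only the `⟨y, ψ⟩ ≥ 0` part of the multiplier `ψ`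
  have hsplit : ∀ i j, (y i j - a i j) * G i j
      = y i j * ψ i j + (y i j - a i j) * (-θ i - lam j) := fun i j => by
    rw [hG]; linear_combination -hcs i j
  simp only [hsplit, sum_add_distrib, Qpi.sum_sub_mul_eq_zero hy.1 ha (fun _ _ => rfl), add_zero]
  exact sum_nonneg fun i _ => sum_nonneg fun j _ => mul_nonneg (hy.2 i j) (hψ0 i j)

theorem sum_bregman_sub_bregman {n k : ℕ} (φ : (Fin k → ℝ) → ℝ) (g : (Fin k → ℝ) → Fin k → ℝ)
    (p a y : Fin n → Fin k → ℝ) :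
    ∑ i, (bregman φ g (p i) (y i) - bregman φ g (a i) (y i))
      = ∑ i, bregman φ g (p i) (a i)
        + ∑ i, ∑ j, (y i j - a i j) * (g (a i) j - g (p i) j) := by
  simp only [bregman_sub_bregman, sum_add_distrib]

theorem bga_dominates_uga_general {n k : ℕ}
    (φ : (Fin k → ℝ) → ℝ) (g : (Fin k → ℝ) → Fin k → ℝ)
    (hφ : ConvexOn ℝ Set.univ φ)
    (hg : ∀ x, HasGradientAt (fun y : EuclideanSpace ℝ (Fin k) => φ ((WithLp.equiv 2 (Fin k → ℝ)) y))
      ((WithLp.equiv 2 (Fin k → ℝ)).symm (g x)) ((WithLp.equiv 2 (Fin k → ℝ)).symm x))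
    (p astar asq : Fin n → Fin k → ℝ) (π : Fin k → ℝ)
    (hastar : astar ∈ Qpi n k π)
    (θs : Fin n → ℝ) (lams : Fin k → ℝ)
    (hstat_star : ∀ i j, g (astar i) j - g (p i) j = -θs i - lams j)
    (hasq : asq ∈ QpiB n k π)
    (θ : Fin n → ℝ) (lam : Fin k → ℝ) (ψ : Fin n → Fin k → ℝ)
    (hψ0 : ∀ i j, 0 ≤ ψ i j)
    (hcs : ∀ i j, ψ i j * asq i j = 0)
    (hstat_sq : ∀ i j, g (asq i) j - g (p i) j = ψ i j - θ i - lam j) :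
    ∀ y ∈ QpiB n k π,
      (∑ i, (bregman φ g (p i) (y i) - bregman φ g (asq i) (y i))
          ≥ ∑ i, bregman φ g (p i) (asq i))
        ∧ (∑ i, bregman φ g (p i) (asq i) ≥ ∑ i, bregman φ g (p i) (astar i))
        ∧ (∑ i, bregman φ g (p i) (astar i)
            = ∑ i, (bregman φ g (p i) (y i) - bregman φ g (astar i) (y i))) := by
  intro y hy
  have horth : ∀ w ∈ Qpi n k π,
      ∑ i, ∑ j, (w i j - astar i j) * (g (astar i) j - g (p i) j) = 0 :=
    fun w hw => Qpi.sum_sub_mul_eq_zero hw hastar hstat_star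
  have hkkt := QpiB.sum_sub_mul_nonneg hy hasq.1 hψ0 hcs hstat_sq
  have hpythagoras : ∑ i, bregman φ g (p i) (asq i)
      = ∑ i, bregman φ g (p i) (astar i) + ∑ i, bregman φ g (astar i) (asq i) := by
    have h := sum_bregman_sub_bregman φ g p astar asq
    rw [horth asq hasq.1, add_zero, sum_sub_distrib] at h
    linarith
  refine ⟨?_, ?_, ?_⟩
  · rw [sum_bregman_sub_bregman]
    linarith
  · rw [hpythagoras]
    exact le_add_of_nonneg_right (sum_nonneg fun i _ => bregman_nonneg hφ hg _ _)
  · rw [sum_bregman_sub_bregman, horth y hy.1, add_zero]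

/-- BGA reduces loss at least as much as UGA: with `a□` the BGA minimizer
(satisfying the KKT conditions on `Q□_π`) and `a★` the UGA minimizer (satisfying the Lagrange
conditions on `Q_π`), for any `y ∈ Q□_π`:
`Σ_i [d_φ(p_i,y_i) − d_φ(a□_i,y_i)] ≥ Σ_i d_φ(p_i,a□_i) ≥ Σ_i d_φ(p_i,a★_i)
  = Σ_i [d_φ(p_i,y_i) − d_φ(a★_i,y_i)]`. -/
theorem bga_dominates_uga {n k : ℕ} (hn : 0 < n)
    (φ : (Fin k → ℝ) → ℝ) (g : (Fin k → ℝ) → Fin k → ℝ)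
    (hφ : ConvexOn ℝ Set.univ φ)
    (hg : ∀ x, HasGradientAt (fun y : EuclideanSpace ℝ (Fin k) => φ ((WithLp.equiv 2 (Fin k → ℝ)) y))
      ((WithLp.equiv 2 (Fin k → ℝ)).symm (g x)) ((WithLp.equiv 2 (Fin k → ℝ)).symm x))
    (p astar asq : Fin n → Fin k → ℝ) (π : Fin k → ℝ)
    (hastar : astar ∈ Qpi n k π)
    (θs : Fin n → ℝ) (lams : Fin k → ℝ)
    (hstat_star : ∀ i j, g (astar i) j - g (p i) j = -θs i - lams j)
    (hasq : asq ∈ QpiB n k π)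
    (θ : Fin n → ℝ) (lam : Fin k → ℝ) (ψ : Fin n → Fin k → ℝ)
    (hψ0 : ∀ i j, 0 ≤ ψ i j)
    (hcs : ∀ i j, ψ i j * asq i j = 0)
    (hstat_sq : ∀ i j, g (asq i) j - g (p i) j = ψ i j - θ i - lam j) :
    ∀ y ∈ QpiB n k π,
      (∑ i, (bregman φ g (p i) (y i) - bregman φ g (asq i) (y i))
          ≥ ∑ i, bregman φ g (p i) (asq i))
        ∧ (∑ i, bregman φ g (p i) (asq i) ≥ ∑ i, bregman φ g (p i) (astar i))
        ∧ (∑ i, bregman φ g (p i) (astar i)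
            = ∑ i, (bregman φ g (p i) (y i) - bregman φ g (astar i) (y i))) :=
  bga_dominates_uga_general φ g hφ hg p astar asq π hastar θs lams hstat_star hasq θ lam ψ hψ0 hcs
    hstat_sq
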